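/- arXiv:math/0501300 — 2 statements merged into one kernel-verified Lean document; each statement's English description precedes it below -/
import Mathlib

section
/- Let s, t ∈ ℝ with s ≤ t and t ≥ 2. Then for all P, Q ∈ Γ_n with r ≤ p_i/q_i ≤ R for all i: (1/(4R^{t−2}))((R+1)/2)^{s−2} Φ_t(P||Q) ≤ Ω_s(Q||P) ≤ (1/(4r^{t−2}))((r+1)/2)^{s−2} Φ_t(P||Q). -/
/-!
Both sides are Csiszár f-divergences with weights `q i` and generators vanishing to first
order at `1`: `Φ_t(P‖Q) = ∑ q_i φ_t(p_i/q_i)` with `φ_t''(x) = x^(t-2)`, and, since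
`Ω_s(Q‖P) = Φ_s((P+Q)/2 ‖ Q)`, `Ω_s(Q‖P) = ∑ q_i φ_s((p_i/q_i + 1)/2)`, whose generator has second
derivative `¼((x+1)/2)^(s-2)`. For `s ≤ t` and `2 ≤ t` the ratio `¼((x+1)/2)^(s-2) / x^(t-2)` of
the second derivatives is decreasing, so on `[r, R] ∋ 1` it lies between its values at `R` and at
`r`. Two functions with the same value and slope at `1` are ordered like their second
derivatives, which gives the bounds term by term.
-/

open Real Finset

/-- Relative information of type `s` (generalized Kullback-Leibler divergence). -/
noncomputable def Phi (n : ℕ) (s : ℝ) (p q : Fin n → ℝ) : ℝ :=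
  if s = 0 then ∑ i, q i * Real.log (q i / p i)
  else if s = 1 then ∑ i, p i * Real.log (p i / q i)
  else (s * (s - 1))⁻¹ * ((∑ i, (p i) ^ s * (q i) ^ (1 - s)) - 1)

/-- Unified relative JS and AG divergence of type `s`. -/
noncomputable def Omega (n : ℕ) (s : ℝ) (p q : Fin n → ℝ) : ℝ :=
  if s = 0 then ∑ i, p i * Real.log (2 * p i / (p i + q i))
  else if s = 1 then ∑ i, ((p i + q i) / 2) * Real.log ((p i + q i) / (2 * p i))
  else (s * (s - 1))⁻¹ * ((∑ i, p i * ((p i + q i) / (2 * p i)) ^ s) - 1)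

/-- Relative J-divergence of type `s`. -/
noncomputable def zeta (n : ℕ) (s : ℝ) (p q : Fin n → ℝ) : ℝ :=
  if s = 1 then ∑ i, (p i - q i) * Real.log ((p i + q i) / (2 * q i))
  else (s - 1)⁻¹ * ∑ i, (p i - q i) * ((p i + q i) / (2 * q i)) ^ (s - 1)

open Set

noncomputable def phiGen (s x : ℝ) : ℝ :=
  if s = 0 then x - 1 - log x
  else if s = 1 then x * log x - x + 1
  else (x ^ s - 1 - s * (x - 1)) / (s * (s - 1))

noncomputable def phiGenDeriv (s x : ℝ) : ℝ :=
  if s = 0 then 1 - x⁻¹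
  else if s = 1 then log x
  else (x ^ (s - 1) - 1) / (s - 1)

lemma phiGen_one (s : ℝ) : phiGen s 1 = 0 := by
  simp [phiGen]

lemma phiGenDeriv_one (s : ℝ) : phiGenDeriv s 1 = 0 := by
  simp [phiGenDeriv]

lemma hasDerivAt_phiGen (s : ℝ) {x : ℝ} (hx : x ≠ 0) :
    HasDerivAt (phiGen s) (phiGenDeriv s x) x := by
  unfold phiGen phiGenDeriv
  rcases eq_or_ne s 0 with rfl | hs0
  · simp only [if_true]
    exact ((hasDerivAt_id x).sub_const 1).sub (hasDerivAt_log hx)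
  rcases eq_or_ne s 1 with rfl | hs1
  · simp only [one_ne_zero, if_true, if_false]
    refine ((((hasDerivAt_id x).mul (hasDerivAt_log hx)).sub (hasDerivAt_id x)).add_const
      1).congr_deriv ?_
    simp [hx]
  · simp only [hs0, hs1, if_false]
    refine ((((hasDerivAt_rpow_const (p := s) (Or.inl hx)).sub_const 1).sub
      (((hasDerivAt_id x).sub_const 1).const_mul s)).div_const (s * (s - 1))).congr_deriv ?_
    have : s - 1 ≠ 0 := sub_ne_zero.2 hs1
    field_simp

lemma hasDerivAt_phiGenDeriv (s : ℝ) {x : ℝ} (hx : 0 < x) :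
    HasDerivAt (phiGenDeriv s) (x ^ (s - 2)) x := by
  unfold phiGenDeriv
  rcases eq_or_ne s 0 with rfl | hs0
  · simp only [if_true]
    refine ((hasDerivAt_inv hx.ne').const_sub 1).congr_deriv ?_
    rw [neg_neg, zero_sub, rpow_neg hx.le, rpow_two]
  rcases eq_or_ne s 1 with rfl | hs1
  · simp only [one_ne_zero, if_true, if_false]
    refine (hasDerivAt_log hx.ne').congr_deriv ?_
    rw [show (1:ℝ) - 2 = -1 by norm_num, rpow_neg_one]
  · simp only [hs0, hs1, if_false]
    refine (((hasDerivAt_rpow_const (p := s - 1) (Or.inl hx.ne')).sub_const 1).div_const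
      (s - 1)).congr_deriv ?_
    have : s - 1 ≠ 0 := sub_ne_zero.2 hs1
    rw [mul_div_cancel_left₀ _ this, sub_sub, one_add_one_eq_two]

lemma mul_div_rpow_eq {a b : ℝ} (s : ℝ) (ha : 0 ≤ a) (hb : 0 < b) :
    b * (a / b) ^ s = a ^ s * b ^ (1 - s) := by
  rw [div_rpow ha hb.le, rpow_sub hb, rpow_one]
  ring

lemma Phi_eq_sum_phiGen (s : ℝ) {n : ℕ} {p q : Fin n → ℝ} (hp : ∀ i, 0 ≤ p i)
    (hq : ∀ i, 0 < q i) (hp1 : ∑ i, p i = 1) (hq1 : ∑ i, q i = 1) :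
    Phi n s p q = ∑ i, q i * phiGen s (p i / q i) := by
  have hpq : ∀ i, q i * (p i / q i) = p i := fun i => mul_div_cancel₀ _ (hq i).ne'
  have hdiff : ∑ i, (p i - q i) = 0 := by rw [sum_sub_distrib, hp1, hq1, sub_self]
  unfold Phi phiGen
  split_ifs with hs0 hs1
  · calc ∑ i, q i * log (q i / p i) = ∑ i, ((p i - q i) + q i * log (q i / p i)) := by
          rw [sum_add_distrib, hdiff, zero_add]
      _ = _ := sum_congr rfl fun i _ => by
          rw [← inv_div, log_inv]
          linear_combination -(hpq i)
  · calc ∑ i, p i * log (p i / q i) = ∑ i, (p i * log (p i / q i) - (p i - q i)) := by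
          rw [sum_sub_distrib, hdiff, sub_zero]
      _ = _ := sum_congr rfl fun i _ => by
          linear_combination (1 - log (p i / q i)) * (hpq i)
  · calc (s * (s - 1))⁻¹ * (∑ i, p i ^ s * q i ^ (1 - s) - 1)
          = ∑ i, (s * (s - 1))⁻¹ * (p i ^ s * q i ^ (1 - s) - q i - s * (p i - q i)) := by
          rw [← mul_sum, sum_sub_distrib, sum_sub_distrib, ← mul_sum, hq1, hdiff, mul_zero,
            sub_zero]
      _ = _ := sum_congr rfl fun i _ => by
          rw [← mul_div_rpow_eq s (hp i) (hq i)]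
          linear_combination (s * (s - 1))⁻¹ * s * (hpq i)

lemma Omega_swap_eq_Phi_midpoint (s : ℝ) {n : ℕ} {p q : Fin n → ℝ} (hp : ∀ i, 0 ≤ p i)
    (hq : ∀ i, 0 < q i) :
    Omega n s q p = Phi n s (fun i => (p i + q i) / 2) q := by
  unfold Omega Phi
  split_ifs
  · refine sum_congr rfl fun i _ => ?_
    rw [div_div_eq_mul_div, add_comm (p i)]
    ring_nf
  · refine sum_congr rfl fun i _ => ?_
    ring_nf
  · congr 2
    refine sum_congr rfl fun i _ => ?_
    rw [← mul_div_rpow_eq s (by linarith [hp i, hq i]) (hq i)]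
    ring_nf

lemma Omega_swap_eq_sum_phiGen (s : ℝ) {n : ℕ} {p q : Fin n → ℝ} (hp : ∀ i, 0 ≤ p i)
    (hq : ∀ i, 0 < q i) (hp1 : ∑ i, p i = 1) (hq1 : ∑ i, q i = 1) :
    Omega n s q p = ∑ i, q i * phiGen s ((p i / q i + 1) / 2) := by
  have hm : ∀ i, 0 ≤ (p i + q i) / 2 := fun i => by linarith [hp i, hq i]
  have hm1 : ∑ i, (p i + q i) / 2 = 1 := by
    rw [← sum_div, sum_add_distrib, hp1, hq1]
    norm_num
  rw [Omega_swap_eq_Phi_midpoint s hp hq, Phi_eq_sum_phiGen s hm hq hm1 hq1]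
  refine sum_congr rfl fun i _ => ?_
  rw [div_add_one (hq i).ne', div_div, div_div, mul_comm 2 (q i)]

lemma monotoneOn_Icc_of_hasDerivAt_nonneg {f f' : ℝ → ℝ} {a b : ℝ}
    (hf : ∀ x ∈ Icc a b, HasDerivAt f (f' x) x) (hf' : ∀ x ∈ Icc a b, 0 ≤ f' x) :
    MonotoneOn f (Icc a b) :=
  monotoneOn_of_hasDerivWithinAt_nonneg (convex_Icc a b)
    (fun x hx => (hf x hx).continuousAt.continuousWithinAt)
    (fun x hx => (hf x (interior_subset hx)).hasDerivWithinAt)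
    (fun x hx => hf' x (interior_subset hx))

lemma antitoneOn_Icc_of_hasDerivAt_nonpos {f f' : ℝ → ℝ} {a b : ℝ}
    (hf : ∀ x ∈ Icc a b, HasDerivAt f (f' x) x) (hf' : ∀ x ∈ Icc a b, f' x ≤ 0) :
    AntitoneOn f (Icc a b) :=
  antitoneOn_of_hasDerivWithinAt_nonpos (convex_Icc a b)
    (fun x hx => (hf x hx).continuousAt.continuousWithinAt)
    (fun x hx => (hf x (interior_subset hx)).hasDerivWithinAt)
    (fun x hx => hf' x (interior_subset hx))

lemma nonneg_of_deriv2_nonneg {h h' h'' : ℝ → ℝ} {a b c x : ℝ} (hc : c ∈ Icc a b)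
    (hh : ∀ y ∈ Icc a b, HasDerivAt h (h' y) y) (hh' : ∀ y ∈ Icc a b, HasDerivAt h' (h'' y) y)
    (hh'' : ∀ y ∈ Icc a b, 0 ≤ h'' y) (h0 : h c = 0) (h1 : h' c = 0) (hx : x ∈ Icc a b) :
    0 ≤ h x := by
  have h'_mono := monotoneOn_Icc_of_hasDerivAt_nonneg hh' hh''
  rw [← h0]
  rcases le_total c x with hcx | hxc
  · have hsub : Icc c b ⊆ Icc a b := Icc_subset_Icc_left hc.1
    refine monotoneOn_Icc_of_hasDerivAt_nonneg (fun y hy => hh y (hsub hy)) (fun y hy => ?_)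
      ⟨le_rfl, hc.2⟩ ⟨hcx, hx.2⟩ hcx
    exact h1 ▸ h'_mono hc (hsub hy) hy.1
  · have hsub : Icc a c ⊆ Icc a b := Icc_subset_Icc_right hc.2
    refine antitoneOn_Icc_of_hasDerivAt_nonpos (fun y hy => hh y (hsub hy)) (fun y hy => ?_)
      ⟨hx.1, hxc⟩ ⟨hc.1, le_rfl⟩ hxc
    exact h1 ▸ h'_mono (hsub hy) hc hy.2

lemma le_of_deriv2_le {f f' f'' g g' g'' : ℝ → ℝ} {a b c x : ℝ} (hc : c ∈ Icc a b)
    (hf : ∀ y ∈ Icc a b, HasDerivAt f (f' y) y) (hf' : ∀ y ∈ Icc a b, HasDerivAt f' (f'' y) y)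
    (hg : ∀ y ∈ Icc a b, HasDerivAt g (g' y) y) (hg' : ∀ y ∈ Icc a b, HasDerivAt g' (g'' y) y)
    (hfg'' : ∀ y ∈ Icc a b, f'' y ≤ g'' y) (h0 : f c = g c) (h1 : f' c = g' c)
    (hx : x ∈ Icc a b) :
    f x ≤ g x :=
  sub_nonneg.1 <| nonneg_of_deriv2_nonneg (h := g - f) (h' := g' - f') (h'' := g'' - f'') hc
    (fun y hy => (hg y hy).sub (hf y hy)) (fun y hy => (hg' y hy).sub (hf' y hy))
    (fun y hy => sub_nonneg.2 (hfg'' y hy)) (sub_eq_zero.2 h0.symm) (sub_eq_zero.2 h1.symm) hx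

lemma rpow_mul_rpow_le_of_mul_le {a b u v α β : ℝ} (ha : 0 < a) (hab : a ≤ b) (hu : 0 < u)
    (h : b * u ≤ a * v) (hαβ : α ≤ β) (hβ : 0 ≤ β) :
    b ^ α * u ^ β ≤ a ^ α * v ^ β := by
  have hba : 1 ≤ b / a := (one_le_div ha).2 hab
  have haα : 0 < a ^ α := rpow_pos_of_pos ha α
  calc b ^ α * u ^ β = a ^ α * ((b / a) ^ α * u ^ β) := by
        rw [div_rpow (ha.le.trans hab) ha.le]
        field_simp
    _ ≤ a ^ α * ((b / a) ^ β * u ^ β) := by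
        gcongr
    _ = a ^ α * (b * u / a) ^ β := by
        rw [← mul_rpow (by positivity) hu.le, div_mul_eq_mul_div]
    _ ≤ a ^ α * v ^ β := by
        gcongr
        · exact div_nonneg (mul_nonneg (ha.le.trans hab) hu.le) ha.le
        · exact (div_le_iff₀' ha).2 h

lemma rpow_midpoint_mul_rpow_le {s t u v : ℝ} (hst : s ≤ t) (ht : 2 ≤ t) (hu : 0 < u)
    (huv : u ≤ v) :
    ((v + 1) / 2) ^ (s - 2) * u ^ (t - 2) ≤ ((u + 1) / 2) ^ (s - 2) * v ^ (t - 2) :=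
  rpow_mul_rpow_le_of_mul_le (by linarith) (by linarith) hu (by nlinarith) (by linarith)
    (by linarith)

lemma HasDerivAt.comp_midpoint_one {f : ℝ → ℝ} {f' x : ℝ} (hf : HasDerivAt f f' ((x + 1) / 2)) :
    HasDerivAt (fun y => f ((y + 1) / 2)) (f' / 2) x :=
  (hf.comp x (((hasDerivAt_id' x).add_const 1).div_const 2)).congr_deriv (by ring)

lemma phiGen_midpoint_bounds {s t r R x : ℝ} (hst : s ≤ t) (ht : 2 ≤ t) (hr : 0 < r)
    (hr1 : r ≤ 1) (h1R : 1 ≤ R) (hx : x ∈ Icc r R) :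
    1 / (4 * R ^ (t - 2)) * ((R + 1) / 2) ^ (s - 2) * phiGen t x ≤ phiGen s ((x + 1) / 2) ∧
      phiGen s ((x + 1) / 2) ≤ 1 / (4 * r ^ (t - 2)) * ((r + 1) / 2) ^ (s - 2) * phiGen t x := by
  have h1 : (1 : ℝ) ∈ Icc r R := ⟨hr1, h1R⟩
  have hpos : ∀ y ∈ Icc r R, 0 < y := fun y hy => hr.trans_le hy.1
  have hmid : ∀ y ∈ Icc r R, 0 < (y + 1) / 2 := fun y hy => by linarith [hpos y hy]
  have hφ := fun (C y : ℝ) (hy : y ∈ Icc r R) => (hasDerivAt_phiGen t (hpos y hy).ne').const_mul C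
  have hφ' := fun (C y : ℝ) (hy : y ∈ Icc r R) =>
    (hasDerivAt_phiGenDeriv t (hpos y hy)).const_mul C
  have hψ := fun y (hy : y ∈ Icc r R) => (hasDerivAt_phiGen s (hmid y hy).ne').comp_midpoint_one
  have hψ' := fun y (hy : y ∈ Icc r R) =>
    (hasDerivAt_phiGenDeriv s (hmid y hy)).comp_midpoint_one.div_const 2
  have hR : 0 < R ^ (t - 2) := rpow_pos_of_pos (hr.trans_le (hr1.trans h1R)) _
  have hr' : 0 < r ^ (t - 2) := rpow_pos_of_pos hr _
  constructor
  · refine le_of_deriv2_le h1 (hφ _) (hφ' _) hψ hψ' (fun y hy => ?_)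
      (by simp [phiGen_one]) (by simp [phiGenDeriv_one]) hx
    have := rpow_midpoint_mul_rpow_le hst ht (hpos y hy) hy.2
    field_simp
    linarith
  · refine le_of_deriv2_le h1 hψ hψ' (hφ _) (hφ' _) (fun y hy => ?_)
      (by simp [phiGen_one]) (by simp [phiGenDeriv_one]) hx
    have := rpow_midpoint_mul_rpow_le hst ht hr hy.1
    field_simp
    linarith

lemma le_one_of_forall_le_div {ι : Type*} {S : Finset ι} {p q : ι → ℝ} {r : ℝ}
    (hq : ∀ i ∈ S, 0 < q i) (hp1 : ∑ i ∈ S, p i = 1) (hq1 : ∑ i ∈ S, q i = 1)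
    (h : ∀ i ∈ S, r ≤ p i / q i) : r ≤ 1 :=
  calc r = ∑ i ∈ S, r * q i := by rw [← mul_sum, hq1, mul_one]
    _ ≤ ∑ i ∈ S, p i := sum_le_sum fun i hi => (le_div_iff₀ (hq i hi)).1 (h i hi)
    _ = 1 := hp1

lemma one_le_of_forall_div_le {ι : Type*} {S : Finset ι} {p q : ι → ℝ} {R : ℝ}
    (hq : ∀ i ∈ S, 0 < q i) (hp1 : ∑ i ∈ S, p i = 1) (hq1 : ∑ i ∈ S, q i = 1)
    (h : ∀ i ∈ S, p i / q i ≤ R) : 1 ≤ R :=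
  calc 1 = ∑ i ∈ S, p i := hp1.symm
    _ ≤ ∑ i ∈ S, R * q i := sum_le_sum fun i hi => (div_le_iff₀ (hq i hi)).1 (h i hi)
    _ = R := by rw [← mul_sum, hq1, mul_one]

theorem stmt_6_general (s t : ℝ) (hst : s ≤ t) (ht : 2 ≤ t)
    (n : ℕ) (p q : Fin n → ℝ)
    (hp : ∀ i, 0 < p i) (hq : ∀ i, 0 < q i)
    (hp1 : ∑ i, p i = 1) (hq1 : ∑ i, q i = 1)
    (r R : ℝ) (hr : 0 < r)
    (hbound : ∀ i, r ≤ p i / q i ∧ p i / q i ≤ R) :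
    (1 / (4 * R ^ (t - 2))) * ((R + 1) / 2) ^ (s - 2) * Phi n t p q ≤ Omega n s q p ∧
      Omega n s q p ≤ (1 / (4 * r ^ (t - 2))) * ((r + 1) / 2) ^ (s - 2) * Phi n t p q := by
  have hr1 : r ≤ 1 := le_one_of_forall_le_div (fun i _ => hq i) hp1 hq1 fun i _ => (hbound i).1
  have h1R : 1 ≤ R := one_le_of_forall_div_le (fun i _ => hq i) hp1 hq1 fun i _ => (hbound i).2
  have hb := fun i => phiGen_midpoint_bounds hst ht hr hr1 h1R (hbound i)
  rw [Phi_eq_sum_phiGen t (fun i => (hp i).le) hq hp1 hq1,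
    Omega_swap_eq_sum_phiGen s (fun i => (hp i).le) hq hp1 hq1, mul_sum, mul_sum]
  constructor <;> refine sum_le_sum fun i _ => ?_ <;> rw [mul_left_comm]
  · exact mul_le_mul_of_nonneg_left (hb i).1 (hq i).le
  · exact mul_le_mul_of_nonneg_left (hb i).2 (hq i).le

theorem stmt_6 (s t : ℝ) (hst : s ≤ t) (ht : 2 ≤ t)
    (n : ℕ) (hn : 2 ≤ n) (p q : Fin n → ℝ)
    (hp : ∀ i, 0 < p i) (hq : ∀ i, 0 < q i)
    (hp1 : ∑ i, p i = 1) (hq1 : ∑ i, q i = 1)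
    (r R : ℝ) (hr : 0 < r) (hrR : r ≤ R)
    (hbound : ∀ i, r ≤ p i / q i ∧ p i / q i ≤ R) :
    (1 / (4 * R ^ (t - 2))) * ((R + 1) / 2) ^ (s - 2) * Phi n t p q ≤ Omega n s q p ∧
      Omega n s q p ≤ (1 / (4 * r ^ (t - 2))) * ((r + 1) / 2) ^ (s - 2) * Phi n t p q :=
  stmt_6_general s t hst ht n p q hp hq hp1 hq1 r R hr hbound
end

section
/- Let s, t ∈ ℝ with 0 ≤ s ≤ 4, t ≥ s, and t(4−s) ≥ 6s − s² − 4. Then for all P, Q ∈ Γ_n with r ≤ p_i/q_i ≤ R for all i: ((r+1)/(2r))^{s−t−1} (((4−s)r + s)/r) Ω_t(P||Q) ≤ ζ_s(Q||P) ≤ ((R+1)/(2R))^{s−t−1} (((4−s)R + s)/R) Ω_t(P||Q). -/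
open Real Finset

/-!
Both divergences are Csiszár sums `∑ qᵢ φ (pᵢ / qᵢ)` with generators vanishing at `1`:
`Ω_t(P‖Q)` with `f = omegaGen t` and `ζ_s(Q‖P)` with `g = zetaGen s`. With `A x = (x + 1) / (2x)`,
`f'' = A^(t-2) / (4x³) ≥ 0` and `g'' = ρ · f''` where `ρ x = A^(s-t-1) ((4-s)x + s) / x`.
The numerator of `ρ'` is `(t(4-s) + 4 - 6s + s²) x + s (t - s) ≥ 0`, so `ρ` is increasing and
`ρ r · f'' ≤ g'' ≤ ρ R · f''` on `[r, R]`. Thus `g - ρ r · f` and `ρ R · f - g` are convex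
there, and Jensen's inequality with weights `qᵢ` at the points `pᵢ / qᵢ`, whose mean is `1`,
gives both bounds.
-/

lemma convexOn_of_hasDerivAt2_nonneg {D : Set ℝ} (hD : Convex ℝ D) {φ φ' φ'' : ℝ → ℝ}
    (hφ : ∀ x ∈ D, HasDerivAt φ (φ' x) x) (hφ' : ∀ x ∈ D, HasDerivAt φ' (φ'' x) x)
    (hφ'' : ∀ x ∈ D, 0 ≤ φ'' x) : ConvexOn ℝ D φ :=
  convexOn_of_hasDerivWithinAt2_nonneg hD
    (fun x hx => (hφ x hx).continuousAt.continuousWithinAt)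
    (fun x hx => (hφ x (interior_subset hx)).hasDerivWithinAt)
    (fun x hx => (hφ' x (interior_subset hx)).hasDerivWithinAt)
    (fun x hx => hφ'' x (interior_subset hx))

lemma ConvexOn.sum_mul_map_nonneg {ι : Type*} {S : Finset ι} {D : Set ℝ} {φ : ℝ → ℝ}
    (hφ : ConvexOn ℝ D φ) (hφ1 : φ 1 = 0) {w x : ι → ℝ} (hw : ∀ i ∈ S, 0 ≤ w i)
    (hw1 : ∑ i ∈ S, w i = 1) (hx : ∀ i ∈ S, x i ∈ D) (hwx : ∑ i ∈ S, w i * x i = 1) :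
    0 ≤ ∑ i ∈ S, w i * φ (x i) := by
  simpa [hwx, hφ1] using hφ.map_sum_le hw hw1 hx

lemma mul_sum_le_sum_of_deriv2_le {ι : Type*} {S : Finset ι} {D : Set ℝ} (hD : Convex ℝ D)
    {f f' f'' g g' g'' : ℝ → ℝ} {m : ℝ}
    (hf : ∀ x ∈ D, HasDerivAt f (f' x) x) (hf' : ∀ x ∈ D, HasDerivAt f' (f'' x) x)
    (hg : ∀ x ∈ D, HasDerivAt g (g' x) x) (hg' : ∀ x ∈ D, HasDerivAt g' (g'' x) x)
    (hfg : ∀ x ∈ D, m * f'' x ≤ g'' x) (hf1 : f 1 = 0) (hg1 : g 1 = 0)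
    {w x : ι → ℝ} (hw : ∀ i ∈ S, 0 ≤ w i) (hw1 : ∑ i ∈ S, w i = 1) (hx : ∀ i ∈ S, x i ∈ D)
    (hwx : ∑ i ∈ S, w i * x i = 1) :
    m * ∑ i ∈ S, w i * f (x i) ≤ ∑ i ∈ S, w i * g (x i) := by
  have hconv : ConvexOn ℝ D fun y => g y - m * f y :=
    convexOn_of_hasDerivAt2_nonneg hD (fun y hy => (hg y hy).sub ((hf y hy).const_mul m))
      (fun y hy => (hg' y hy).sub ((hf' y hy).const_mul m)) (fun y hy => sub_nonneg.2 (hfg y hy))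
  have := hconv.sum_mul_map_nonneg (by simp [hf1, hg1]) hw hw1 hx hwx
  simp only [mul_sub, sum_sub_distrib, mul_left_comm _ m, ← mul_sum] at this
  linarith

theorem mul_sum_le_sum_le_mul_sum_of_deriv2 {ι : Type*} {S : Finset ι} {D : Set ℝ}
    (hD : Convex ℝ D) {f f' f'' g g' g'' : ℝ → ℝ} {m M : ℝ}
    (hf : ∀ x ∈ D, HasDerivAt f (f' x) x) (hf' : ∀ x ∈ D, HasDerivAt f' (f'' x) x)
    (hg : ∀ x ∈ D, HasDerivAt g (g' x) x) (hg' : ∀ x ∈ D, HasDerivAt g' (g'' x) x)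
    (hm : ∀ x ∈ D, m * f'' x ≤ g'' x) (hM : ∀ x ∈ D, g'' x ≤ M * f'' x)
    (hf1 : f 1 = 0) (hg1 : g 1 = 0)
    {w x : ι → ℝ} (hw : ∀ i ∈ S, 0 ≤ w i) (hw1 : ∑ i ∈ S, w i = 1) (hx : ∀ i ∈ S, x i ∈ D)
    (hwx : ∑ i ∈ S, w i * x i = 1) :
    m * ∑ i ∈ S, w i * f (x i) ≤ ∑ i ∈ S, w i * g (x i) ∧
      ∑ i ∈ S, w i * g (x i) ≤ M * ∑ i ∈ S, w i * f (x i) := by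
  refine ⟨mul_sum_le_sum_of_deriv2_le hD hf hf' hg hg' hm hf1 hg1 hw hw1 hx hwx, ?_⟩
  have := mul_sum_le_sum_of_deriv2_le hD (f := fun y => -f y) (g := fun y => -g y)
    (fun y hy => (hf y hy).neg) (fun y hy => (hf' y hy).neg)
    (fun y hy => (hg y hy).neg) (fun y hy => (hg' y hy).neg)
    (fun y hy => by simpa using hM y hy) (by simp [hf1]) (by simp [hg1]) hw hw1 hx hwx
  simpa only [mul_neg, sum_neg_distrib, neg_le_neg_iff] using this

lemma hasDerivAt_add_one_div_two_mul {x : ℝ} (hx : x ≠ 0) :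
    HasDerivAt (fun y : ℝ => (y + 1) / (2 * y)) (-1 / (2 * x ^ 2)) x := by
  have h := ((hasDerivAt_id' x).add_const 1).div ((hasDerivAt_id' x).const_mul 2) (by simpa)
  refine h.congr_deriv ?_
  field_simp
  ring

lemma hasDerivAt_add_one_div_two_mul_rpow {x : ℝ} (hx : 0 < x) (a : ℝ) :
    HasDerivAt (fun y : ℝ => ((y + 1) / (2 * y)) ^ a)
      (-1 / (2 * x ^ 2) * a * ((x + 1) / (2 * x)) ^ (a - 1)) x :=
  (hasDerivAt_add_one_div_two_mul hx.ne').rpow_const (Or.inl (by positivity))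

lemma hasDerivAt_log_add_one_div_two_mul {x : ℝ} (hx : 0 < x) :
    HasDerivAt (fun y : ℝ => log ((y + 1) / (2 * y))) (-(x * (x + 1))⁻¹) x := by
  refine ((hasDerivAt_add_one_div_two_mul hx.ne').log (by positivity)).congr_deriv ?_
  field_simp

noncomputable def omegaGen (t x : ℝ) : ℝ :=
  if t = 0 then x * log (2 * x / (x + 1))
  else if t = 1 then (x + 1) / 2 * log ((x + 1) / (2 * x))
  else (t * (t - 1))⁻¹ * (x * ((x + 1) / (2 * x)) ^ t - x)

noncomputable def omegaGenDeriv (t x : ℝ) : ℝ :=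
  if t = 0 then -log ((x + 1) / (2 * x)) + (x + 1)⁻¹
  else if t = 1 then log ((x + 1) / (2 * x)) / 2 - (2 * x)⁻¹
  else (t * (t - 1))⁻¹ *
    (((x + 1) / (2 * x)) ^ t - t * ((x + 1) / (2 * x)) ^ (t - 1) / (2 * x) - 1)

noncomputable def zetaGen (s x : ℝ) : ℝ :=
  if s = 1 then (1 - x) * log ((x + 1) / (2 * x))
  else (s - 1)⁻¹ * ((1 - x) * ((x + 1) / (2 * x)) ^ (s - 1))

noncomputable def zetaGenDeriv (s x : ℝ) : ℝ :=
  if s = 1 then -log ((x + 1) / (2 * x)) - (1 - x) / (x * (x + 1))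
  else -((s - 1)⁻¹ * ((x + 1) / (2 * x)) ^ (s - 1)) -
    (1 - x) * ((x + 1) / (2 * x)) ^ (s - 2) / (2 * x ^ 2)

lemma omegaGen_one (t : ℝ) : omegaGen t 1 = 0 := by
  unfold omegaGen
  split_ifs <;> norm_num

lemma zetaGen_one (s : ℝ) : zetaGen s 1 = 0 := by
  unfold zetaGen
  split_ifs <;> norm_num

lemma hasDerivAt_omegaGen (t : ℝ) {x : ℝ} (hx : 0 < x) :
    HasDerivAt (omegaGen t) (omegaGenDeriv t x) x := by
  have hA := hasDerivAt_log_add_one_div_two_mul hx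
  rcases eq_or_ne t 0 with rfl | ht0
  · have hf : omegaGen 0 = fun y => -(y * log ((y + 1) / (2 * y))) := by
      ext y
      rw [omegaGen, if_pos rfl, ← inv_div, log_inv, mul_neg]
    rw [hf, omegaGenDeriv, if_pos rfl]
    refine ((hasDerivAt_id' x).mul hA).neg.congr_deriv ?_
    field_simp
    ring
  rcases eq_or_ne t 1 with rfl | ht1
  · have hf : omegaGen 1 = fun y => (y + 1) / 2 * log ((y + 1) / (2 * y)) := by
      ext y
      rw [omegaGen, if_neg one_ne_zero, if_pos rfl]
    rw [hf, omegaGenDeriv, if_neg one_ne_zero, if_pos rfl]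
    refine ((((hasDerivAt_id' x).add_const 1).div_const 2).mul hA).congr_deriv ?_
    field_simp
    ring
  · have hf : omegaGen t = fun y => (t * (t - 1))⁻¹ * (y * ((y + 1) / (2 * y)) ^ t - y) := by
      ext y
      rw [omegaGen, if_neg ht0, if_neg ht1]
    rw [hf, omegaGenDeriv, if_neg ht0, if_neg ht1]
    refine ((((hasDerivAt_id' x).mul (hasDerivAt_add_one_div_two_mul_rpow hx t)).sub
      (hasDerivAt_id' x)).const_mul _).congr_deriv ?_
    have hA0 : (x + 1) / (2 * x) ≠ 0 := by positivity
    rw [rpow_sub_one hA0]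
    field_simp
    ring

lemma hasDerivAt_omegaGenDeriv (t : ℝ) {x : ℝ} (hx : 0 < x) :
    HasDerivAt (omegaGenDeriv t) (((x + 1) / (2 * x)) ^ (t - 2) / (4 * x ^ 3)) x := by
  have hA := hasDerivAt_log_add_one_div_two_mul hx
  have hA0 : 0 < (x + 1) / (2 * x) := by positivity
  rcases eq_or_ne t 0 with rfl | ht0
  · have hf : omegaGenDeriv 0 = fun y => -log ((y + 1) / (2 * y)) + (y + 1)⁻¹ := by
      ext y
      rw [omegaGenDeriv, if_pos rfl]
    rw [hf]
    refine (hA.neg.add (((hasDerivAt_id' x).add_const 1).inv (by positivity))).congr_deriv ?_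
    rw [zero_sub, rpow_neg hA0.le, rpow_two]
    field_simp
    ring
  rcases eq_or_ne t 1 with rfl | ht1
  · have hf : omegaGenDeriv 1 = fun y => log ((y + 1) / (2 * y)) / 2 - (2 * y)⁻¹ := by
      ext y
      rw [omegaGenDeriv, if_neg one_ne_zero, if_pos rfl]
    rw [hf]
    refine ((hA.div_const 2).sub
      (((hasDerivAt_id' x).const_mul 2).inv (by positivity))).congr_deriv ?_
    rw [show (1 : ℝ) - 2 = -1 by norm_num, rpow_neg_one]
    field_simp
    ring
  · have hf : omegaGenDeriv t = fun y => (t * (t - 1))⁻¹ *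
        (((y + 1) / (2 * y)) ^ t - t * ((y + 1) / (2 * y)) ^ (t - 1) / (2 * y) - 1) := by
      ext y
      rw [omegaGenDeriv, if_neg ht0, if_neg ht1]
    rw [hf]
    refine ((((hasDerivAt_add_one_div_two_mul_rpow hx t).sub
      (((hasDerivAt_add_one_div_two_mul_rpow hx (t - 1)).const_mul t).div
        ((hasDerivAt_id' x).const_mul 2) (by positivity))).sub_const 1).const_mul _).congr_deriv ?_
    rw [sub_sub, one_add_one_eq_two, rpow_sub_one hA0.ne', rpow_sub hA0, rpow_two]
    have ht1' : t - 1 ≠ 0 := sub_ne_zero.2 ht1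
    field_simp
    ring

lemma hasDerivAt_zetaGen (s : ℝ) {x : ℝ} (hx : 0 < x) :
    HasDerivAt (zetaGen s) (zetaGenDeriv s x) x := by
  have hA0 : 0 < (x + 1) / (2 * x) := by positivity
  have h1 : HasDerivAt (fun y : ℝ => 1 - y) (-1) x := (hasDerivAt_id' x).const_sub 1
  rcases eq_or_ne s 1 with rfl | hs1
  · have hf : zetaGen 1 = fun y => (1 - y) * log ((y + 1) / (2 * y)) := by
      ext y
      rw [zetaGen, if_pos rfl]
    rw [hf, zetaGenDeriv, if_pos rfl]
    refine (h1.mul (hasDerivAt_log_add_one_div_two_mul hx)).congr_deriv ?_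
    field_simp
    ring
  · have hf : zetaGen s = fun y => (s - 1)⁻¹ * ((1 - y) * ((y + 1) / (2 * y)) ^ (s - 1)) := by
      ext y
      rw [zetaGen, if_neg hs1]
    rw [hf, zetaGenDeriv, if_neg hs1]
    refine ((h1.mul (hasDerivAt_add_one_div_two_mul_rpow hx (s - 1))).const_mul _).congr_deriv ?_
    rw [sub_sub, one_add_one_eq_two, rpow_sub_one hA0.ne', rpow_sub hA0, rpow_two]
    have hs1' : s - 1 ≠ 0 := sub_ne_zero.2 hs1
    field_simp
    ring

lemma hasDerivAt_zetaGenDeriv (s : ℝ) {x : ℝ} (hx : 0 < x) :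
    HasDerivAt (zetaGenDeriv s)
      (((4 - s) * x + s) * ((x + 1) / (2 * x)) ^ (s - 3) / (4 * x ^ 4)) x := by
  have hA0 : 0 < (x + 1) / (2 * x) := by positivity
  have h1 : HasDerivAt (fun y : ℝ => 1 - y) (-1) x := (hasDerivAt_id' x).const_sub 1
  have hsq : HasDerivAt (fun y : ℝ => 2 * y ^ 2) (2 * (2 * x)) x := by
    simpa using (hasDerivAt_pow 2 x).const_mul (2 : ℝ)
  rcases eq_or_ne s 1 with rfl | hs1
  · have hf : zetaGenDeriv 1 = fun y => -log ((y + 1) / (2 * y)) - (1 - y) / (y * (y + 1)) := by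
      ext y
      rw [zetaGenDeriv, if_pos rfl]
    rw [hf]
    refine ((hasDerivAt_log_add_one_div_two_mul hx).neg.sub (h1.div
      ((hasDerivAt_id' x).mul ((hasDerivAt_id' x).add_const 1))
      (mul_pos hx (by positivity)).ne')).congr_deriv ?_
    rw [show (1 : ℝ) - 3 = -2 by norm_num, rpow_neg hA0.le, rpow_two]
    simp only [Pi.mul_apply]
    field_simp
    ring
  · have hf : zetaGenDeriv s = fun y => -((s - 1)⁻¹ * ((y + 1) / (2 * y)) ^ (s - 1)) -
        (1 - y) * ((y + 1) / (2 * y)) ^ (s - 2) / (2 * y ^ 2) := by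
      ext y
      rw [zetaGenDeriv, if_neg hs1]
    rw [hf]
    refine ((((hasDerivAt_add_one_div_two_mul_rpow hx (s - 1)).const_mul _).neg).sub
      ((h1.mul (hasDerivAt_add_one_div_two_mul_rpow hx (s - 2))).div hsq
        (by positivity))).congr_deriv ?_
    simp only [Pi.mul_apply]
    rw [show s - 1 - 1 = s - 3 + 1 by ring, show s - 2 - 1 = s - 3 by ring,
      show s - 2 = s - 3 + 1 by ring, rpow_add_one hA0.ne']
    have hs1' : s - 1 ≠ 0 := sub_ne_zero.2 hs1
    field_simp
    ring

noncomputable def zetaOmegaRatio (s t x : ℝ) : ℝ :=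
  ((x + 1) / (2 * x)) ^ (s - t - 1) * (((4 - s) * x + s) / x)

lemma zetaGen_deriv2_eq_ratio_mul (s t : ℝ) {x : ℝ} (hx : 0 < x) :
    ((4 - s) * x + s) * ((x + 1) / (2 * x)) ^ (s - 3) / (4 * x ^ 4) =
      zetaOmegaRatio s t x * (((x + 1) / (2 * x)) ^ (t - 2) / (4 * x ^ 3)) := by
  rw [zetaOmegaRatio, show s - 3 = s - t - 1 + (t - 2) by ring, rpow_add (by positivity)]
  field_simp

lemma hasDerivAt_zetaOmegaRatio (s t : ℝ) {x : ℝ} (hx : 0 < x) :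
    HasDerivAt (zetaOmegaRatio s t)
      (((x + 1) / (2 * x)) ^ (s - t - 2) *
        ((t * (4 - s) + 4 - 6 * s + s ^ 2) * x + s * (t - s)) / (2 * x ^ 3)) x := by
  have hA0 : 0 < (x + 1) / (2 * x) := by positivity
  have hlin : HasDerivAt (fun y : ℝ => (4 - s) * y + s) (4 - s) x := by
    simpa using ((hasDerivAt_id' x).const_mul (4 - s)).add_const s
  refine ((hasDerivAt_add_one_div_two_mul_rpow hx (s - t - 1)).mul
    (hlin.div (hasDerivAt_id' x) hx.ne')).congr_deriv ?_
  simp only [Pi.div_apply]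
  rw [show s - t - 1 - 1 = s - t - 2 by ring, show s - t - 1 = s - t - 2 + 1 by ring,
    rpow_add_one hA0.ne']
  field_simp
  ring

lemma monotoneOn_zetaOmegaRatio {s t : ℝ} (hs : 0 ≤ s) (hst : s ≤ t)
    (hts : 6 * s - s ^ 2 - 4 ≤ t * (4 - s)) : MonotoneOn (zetaOmegaRatio s t) (Set.Ioi 0) := by
  refine monotoneOn_of_hasDerivWithinAt_nonneg (convex_Ioi 0)
    (fun x hx => (hasDerivAt_zetaOmegaRatio s t hx).continuousAt.continuousWithinAt)
    (fun x hx => (hasDerivAt_zetaOmegaRatio s t (interior_subset hx)).hasDerivWithinAt)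
    (fun x hx => ?_)
  have hx : 0 < x := interior_subset hx
  have hnum : 0 ≤ (t * (4 - s) + 4 - 6 * s + s ^ 2) * x + s * (t - s) := by
    have := mul_nonneg hs (sub_nonneg.2 hst)
    have := mul_nonneg (by linarith : 0 ≤ t * (4 - s) + 4 - 6 * s + s ^ 2) hx.le
    linarith
  positivity

lemma Omega_eq_sum_omegaGen {n : ℕ} (t : ℝ) {p q : Fin n → ℝ} (hp : ∀ i, 0 < p i)
    (hq : ∀ i, 0 < q i) (hp1 : ∑ i, p i = 1) :
    Omega n t p q = ∑ i, q i * omegaGen t (p i / q i) := by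
  have hA : ∀ i, (p i / q i + 1) / (2 * (p i / q i)) = (p i + q i) / (2 * p i) := fun i => by
    have := hp i; have := hq i
    field_simp
  unfold Omega omegaGen
  split_ifs with ht0 ht1
  · refine sum_congr rfl fun i _ => ?_
    have := hp i; have := hq i
    rw [← inv_div (p i / q i + 1), hA, inv_div]
    field_simp
  · refine sum_congr rfl fun i _ => ?_
    have := hp i; have := hq i
    rw [hA]
    field_simp
  · have hsub : ∑ i, p i * ((p i + q i) / (2 * p i)) ^ t - 1 =
        ∑ i, (p i * ((p i + q i) / (2 * p i)) ^ t - p i) := by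
      rw [sum_sub_distrib, hp1]
    rw [hsub, mul_sum]
    refine sum_congr rfl fun i _ => ?_
    have := hp i; have := hq i
    rw [hA]
    field_simp

lemma zeta_eq_sum_zetaGen {n : ℕ} (s : ℝ) {p q : Fin n → ℝ} (hp : ∀ i, 0 < p i)
    (hq : ∀ i, 0 < q i) : zeta n s q p = ∑ i, q i * zetaGen s (p i / q i) := by
  have hA : ∀ i, (p i / q i + 1) / (2 * (p i / q i)) = (q i + p i) / (2 * p i) := fun i => by
    have := hp i; have := hq i
    field_simp
    ring
  unfold zeta zetaGen
  split_ifs with hs1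
  · refine sum_congr rfl fun i _ => ?_
    have := hq i
    rw [hA]
    field_simp
  · rw [mul_sum]
    refine sum_congr rfl fun i _ => ?_
    have := hq i
    rw [hA]
    field_simp

theorem stmt_14_general (s t : ℝ) (hs0 : 0 ≤ s) (hst : s ≤ t) (hts : 6 * s - s ^ 2 - 4 ≤ t * (4 - s))
    (n : ℕ) (p q : Fin n → ℝ)
    (hp : ∀ i, 0 < p i) (hq : ∀ i, 0 < q i)
    (hp1 : ∑ i, p i = 1) (hq1 : ∑ i, q i = 1)
    (r R : ℝ) (hr : 0 < r) (hrR : r ≤ R)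
    (hbound : ∀ i, r ≤ p i / q i ∧ p i / q i ≤ R) :
    ((r + 1) / (2 * r)) ^ (s - t - 1) * (((4 - s) * r + s) / r) * Omega n t p q ≤ zeta n s q p ∧
      zeta n s q p ≤ ((R + 1) / (2 * R)) ^ (s - t - 1) * (((4 - s) * R + s) / R) * Omega n t p q := by
  have hpos : ∀ x ∈ Set.Icc r R, 0 < x := fun x hx => hr.trans_le hx.1
  have hratio : ∀ x ∈ Set.Icc r R, zetaOmegaRatio s t r ≤ zetaOmegaRatio s t x ∧
      zetaOmegaRatio s t x ≤ zetaOmegaRatio s t R := fun x hx =>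
    have hmono := monotoneOn_zetaOmegaRatio hs0 hst hts
    ⟨hmono hr (hpos x hx) hx.1, hmono (hpos x hx) (hr.trans_le hrR) hx.2⟩
  have hmean : ∑ i, q i * (p i / q i) = 1 := by
    simp_rw [mul_div_cancel₀ _ (hq _).ne']
    exact hp1
  rw [Omega_eq_sum_omegaGen t hp hq hp1, zeta_eq_sum_zetaGen s hp hq]
  refine mul_sum_le_sum_le_mul_sum_of_deriv2 (convex_Icc r R)
    (fun x hx => hasDerivAt_omegaGen t (hpos x hx))
    (fun x hx => hasDerivAt_omegaGenDeriv t (hpos x hx))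
    (fun x hx => hasDerivAt_zetaGen s (hpos x hx))
    (fun x hx => hasDerivAt_zetaGenDeriv s (hpos x hx)) (fun x hx => ?_) (fun x hx => ?_)
    (omegaGen_one t) (zetaGen_one s) (fun i _ => (hq i).le) hq1 (fun i _ => hbound i) hmean
  all_goals
    have hx0 := hpos x hx
    rw [zetaGen_deriv2_eq_ratio_mul s t hx0]
    have hf2 : 0 ≤ ((x + 1) / (2 * x)) ^ (t - 2) / (4 * x ^ 3) := by positivity
  · exact mul_le_mul_of_nonneg_right (hratio x hx).1 hf2
  · exact mul_le_mul_of_nonneg_right (hratio x hx).2 hf2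

theorem stmt_14 (s t : ℝ) (hs0 : 0 ≤ s) (hs4 : s ≤ 4) (hst : s ≤ t) (hts : 6 * s - s ^ 2 - 4 ≤ t * (4 - s))
    (n : ℕ) (hn : 2 ≤ n) (p q : Fin n → ℝ)
    (hp : ∀ i, 0 < p i) (hq : ∀ i, 0 < q i)
    (hp1 : ∑ i, p i = 1) (hq1 : ∑ i, q i = 1)
    (r R : ℝ) (hr : 0 < r) (hrR : r ≤ R)
    (hbound : ∀ i, r ≤ p i / q i ∧ p i / q i ≤ R) :
    ((r + 1) / (2 * r)) ^ (s - t - 1) * (((4 - s) * r + s) / r) * Omega n t p q ≤ zeta n s q p ∧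
      zeta n s q p ≤ ((R + 1) / (2 * R)) ^ (s - t - 1) * (((4 - s) * R + s) / R) * Omega n t p q :=
  stmt_14_general s t hs0 hst hts n p q hp hq hp1 hq1 r R hr hrR hbound
end
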